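/- Let G be a multigraph, let k be a positive integer, and let v be a vertex of G. If the degree of v is less than 2k and for any two distinct neighbors x and y of v the maximum number of pairwise edge-disjoint paths between x and y in G is at least k, then v is not a cut-vertex of G. -/

import Mathlib

/-- A finite loopless multigraph: an edge type `E` together with an assignment of a
pair of distinct endpoints to each edge. -/
structure Multigraph (V : Type*) (E : Type*) where
  ends : E → Sym2 V
  loopless : ∀ e : E, ¬ (ends e).IsDiag

namespace Multigraph

variable {V E : Type*}

/-- Walks in a multigraph. -/
inductive Walk (G : Multigraph V E) : V → V → Type _ where
  | nil (v : V) : Walk G v v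
  | cons {u v w : V} (e : E) (he : G.ends e = s(u, v)) (p : Walk G v w) : Walk G u w

namespace Walk

variable {G : Multigraph V E}

/-- The list of vertices visited by a walk, in order. -/
def support : {u v : V} → G.Walk u v → List V
  | _, _, .nil v => [v]
  | u, _, .cons _ _ p => u :: p.support

/-- The list of edges traversed by a walk, in order. -/
def edgeList : {u v : V} → G.Walk u v → List E
  | _, _, .nil _ => []
  | _, _, .cons e _ p => e :: p.edgeList

/-- A walk is a path if it visits no vertex twice. -/
def IsPath {u v : V} (p : G.Walk u v) : Prop := p.support.Nodup

end Walk

/-- Two vertices are reachable if there is a walk between them. -/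
def Reachable (G : Multigraph V E) (x y : V) : Prop := Nonempty (G.Walk x y)

/-- A multigraph is connected if it is nonempty and every two vertices are
reachable from each other. -/
def Connected (G : Multigraph V E) : Prop :=
  Nonempty V ∧ ∀ x y : V, G.Reachable x y

/-- `x` is a neighbour of `v`. -/
def Nbr (G : Multigraph V E) (v x : V) : Prop := ∃ e : E, G.ends e = s(v, x)

/-- The degree of `v`: the number of edges incident to `v`. -/
noncomputable def mdeg (G : Multigraph V E) (v : V) : ℕ :=
  {e : E | v ∈ G.ends e}.ncard

/-- `p_G(x,y) ≥ k`: there are at least `k` pairwise edge-disjoint paths between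
`x` and `y`. -/
def EdgeDisjointPaths (G : Multigraph V E) (x y : V) (k : ℕ) : Prop :=
  ∃ P : Fin k → G.Walk x y, (∀ i, (P i).IsPath) ∧
    ∀ i j, i ≠ j → List.Disjoint (P i).edgeList (P j).edgeList

/-- `v` is a cut-vertex of the connected multigraph `G`: deleting `v` (together with
its incident edges) disconnects `G`, i.e. some two vertices distinct from `v` are
joined by no walk avoiding `v`. -/
def IsCutVertex (G : Multigraph V E) (v : V) : Prop :=
  G.Connected ∧
    ¬ ∀ x y : V, x ≠ v → y ≠ v → ∃ p : G.Walk x y, v ∉ p.support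

end Multigraph

/-!
Suppose `v` separates `x` from `y`. Following walks from `x` and from `y` to `v` up to their
first visit of `v` gives two distinct neighbours `a`, `b` of `v` that are separated by `v` as
well. Each of the `k` edge-disjoint `a`–`b` paths then passes through `v` as an interior vertex,
so it uses two edges at `v`; these `2k` edges are distinct, contradicting `deg v < 2k`.
-/

namespace Multigraph

variable {V E : Type*} {G : Multigraph V E}

namespace Walk

def append : {u v w : V} → G.Walk u v → G.Walk v w → G.Walk u w
  | _, _, _, .nil _, q => q
  | _, _, _, .cons e he p, q => .cons e he (p.append q)

def reverse : {u v : V} → G.Walk u v → G.Walk v u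
  | _, _, .nil u => .nil u
  | u, _, .cons e he p => p.reverse.append (.cons e (he.trans Sym2.eq_swap) (.nil u))

lemma support_eq_cons : ∀ {u v : V} (p : G.Walk u v), p.support = u :: p.support.tail
  | _, _, .nil _ => rfl
  | _, _, .cons _ _ _ => rfl

lemma start_mem_support {u v : V} (p : G.Walk u v) : u ∈ p.support := by
  rw [support_eq_cons]
  exact List.mem_cons_self

lemma support_append : ∀ {u v w : V} (p : G.Walk u v) (q : G.Walk v w),
    (p.append q).support = p.support ++ q.support.tail
  | _, _, _, .nil _, q => q.support_eq_cons
  | _, _, _, .cons _ _ p, q => by simp [append, support, support_append p q]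

lemma support_reverse : ∀ {u v : V} (p : G.Walk u v), p.reverse.support = p.support.reverse
  | _, _, .nil _ => rfl
  | _, _, .cons _ _ p => by simp [reverse, support, support_append, support_reverse p]

lemma notMem_support_append {u v w z : V} {p : G.Walk u v} {q : G.Walk v w}
    (hp : z ∉ p.support) (hq : z ∉ q.support) : z ∉ (p.append q).support := by
  rw [support_append, List.mem_append, not_or]
  exact ⟨hp, fun h => hq (List.mem_of_mem_tail h)⟩

lemma IsPath.exists_two_edges_of_mem_support {v : V} :
    ∀ {u w : V} {p : G.Walk u w}, p.IsPath → v ∈ p.support → v ≠ u → v ≠ w →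
      ∃ e ∈ p.edgeList, ∃ f ∈ p.edgeList, e ≠ f ∧ v ∈ G.ends e ∧ v ∈ G.ends f
  | _, _, .nil _, _, hv, _, hvw => (hvw (List.mem_singleton.mp hv)).elim
  | _, _, .cons (v := u') e he p, hp, hv, hvu, hvw => by
    rw [IsPath, support, List.nodup_cons] at hp
    obtain ⟨hu, hp⟩ := hp
    rcases List.mem_cons.mp hv with rfl | hv
    · exact (hvu rfl).elim
    by_cases hvu' : v = u'
    · subst hvu'
      cases p with
      | nil => exact (hvw rfl).elim
      | cons f hf p =>
        refine ⟨e, by simp [edgeList], f, by simp [edgeList], ?_, by simp [he], by simp [hf]⟩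
        rintro rfl
        -- `e` would join `v` to both its predecessor and its successor on the path
        rw [he] at hf
        rcases Sym2.eq_iff.mp hf with ⟨h, -⟩ | ⟨rfl, -⟩
        · exact hvu h.symm
        · exact hu (List.mem_cons_of_mem _ p.start_mem_support)
    · obtain ⟨e', he', f', hf', hef, hve, hvf⟩ :=
        IsPath.exists_two_edges_of_mem_support hp hv hvu' hvw
      exact ⟨e', List.mem_cons_of_mem _ he', f', List.mem_cons_of_mem _ hf', hef, hve, hvf⟩

end Walk

open Walk

lemma Nbr.ne {v a : V} (h : G.Nbr v a) : v ≠ a := by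
  rintro rfl
  obtain ⟨e, he⟩ := h
  exact G.loopless e (by rw [he]; exact Sym2.mk_isDiag_iff.mpr rfl)

/-- Cut a walk to `v` at its first visit of `v`. -/
lemma exists_nbr_walk_notMem_support {v : V} :
    ∀ {x : V}, G.Walk x v → x ≠ v → ∃ a, G.Nbr v a ∧ ∃ q : G.Walk x a, v ∉ q.support
  | _, .nil _, hx => (hx rfl).elim
  | x, .cons (v := w) e he p, hx => by
    by_cases hw : w = v
    · subst hw
      exact ⟨x, ⟨e, he.trans Sym2.eq_swap⟩, .nil x, by simp [support, Ne.symm hx]⟩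
    · obtain ⟨a, ha, q, hq⟩ := exists_nbr_walk_notMem_support p hw
      exact ⟨a, ha, .cons e he q, by simp [support, Ne.symm hx, hq]⟩

lemma exists_nbrs_separated {v x y : V} (hxv : G.Reachable x v) (hyv : G.Reachable y v)
    (hx : x ≠ v) (hy : y ≠ v) (hsep : ∀ p : G.Walk x y, v ∈ p.support) :
    ∃ a b, G.Nbr v a ∧ G.Nbr v b ∧ a ≠ b ∧ ∀ r : G.Walk a b, v ∈ r.support := by
  obtain ⟨a, ha, qx, hqx⟩ := exists_nbr_walk_notMem_support hxv.some hx
  obtain ⟨b, hb, qy, hqy⟩ := exists_nbr_walk_notMem_support hyv.some hy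
  have hqy' : v ∉ qy.reverse.support := by simpa [support_reverse] using hqy
  have hab : ∀ r : G.Walk a b, v ∈ r.support := fun r => by
    by_contra hr
    exact notMem_support_append hqx (notMem_support_append hr hqy') (hsep _)
  refine ⟨a, b, ha, hb, ?_, hab⟩
  rintro rfl
  exact ha.ne (List.mem_singleton.mp (hab (.nil a)))

end Multigraph

lemma two_mul_le_ncard_of_pairwise_disjoint {E : Type*} {S : Set E} (hS : S.Finite) {k : ℕ}
    (L : Fin k → List E) (hdisj : ∀ i j, i ≠ j → (L i).Disjoint (L j))
    (htwo : ∀ i, ∃ e ∈ L i, ∃ f ∈ L i, e ≠ f ∧ e ∈ S ∧ f ∈ S) :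
    2 * k ≤ S.ncard := by
  choose e he f hf hef heS hfS using htwo
  have := hS.to_subtype
  let g : Fin k × Bool → S := fun p => bif p.2 then ⟨f p.1, hfS p.1⟩ else ⟨e p.1, heS p.1⟩
  have hg : ∀ p, (g p : E) ∈ L p.1 := by rintro ⟨i, _ | _⟩ <;> simp [g, he, hf]
  have hinj : Function.Injective g := by
    rintro ⟨i, c⟩ ⟨j, d⟩ hgij
    obtain rfl | hij := eq_or_ne i j
    · cases c <;> cases d <;> simp_all [g, Subtype.ext_iff]
      exact hef i hgij.symm
    · exact (hdisj i j hij (hg (i, c)) (congrArg Subtype.val hgij ▸ hg (j, d))).elim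
  simpa [Nat.card_coe_set_eq, mul_comm] using Nat.card_le_card_of_injective g hinj

theorem not_cut_vertex_general {V E : Type*} [Finite E]
    (G : Multigraph V E) (k : ℕ) (v : V)
    (hdeg : G.mdeg v < 2 * k)
    (hpaths : ∀ x y : V, G.Nbr v x → G.Nbr v y → x ≠ y →
      G.EdgeDisjointPaths x y k) :
    ¬ G.IsCutVertex v := by
  rintro ⟨⟨-, hconn⟩, hcut⟩
  push Not at hcut
  obtain ⟨x, y, hx, hy, hsep⟩ := hcut
  obtain ⟨a, b, ha, hb, hab, hsep⟩ := G.exists_nbrs_separated (hconn x v) (hconn y v) hx hy hsep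
  obtain ⟨P, hP, hdisj⟩ := hpaths a b ha hb hab
  have h2k : 2 * k ≤ G.mdeg v :=
    two_mul_le_ncard_of_pairwise_disjoint (Set.toFinite _) (fun i => (P i).edgeList) hdisj
      fun i => (hP i).exists_two_edges_of_mem_support (hsep (P i)) ha.ne hb.ne
  omega

/-- Let `G` be a multigraph and `k` a positive integer. If `v` is a vertex of degree
less than `2k` such that `p_G(x,y) ≥ k` for any two distinct neighbours `x`, `y` of
`v`, then `v` is not a cut-vertex. -/
theorem not_cut_vertex {V E : Type*} [Finite V] [Finite E]
    (G : Multigraph V E) (k : ℕ) (hk : 0 < k) (v : V)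
    (hdeg : G.mdeg v < 2 * k)
    (hpaths : ∀ x y : V, G.Nbr v x → G.Nbr v y → x ≠ y →
      G.EdgeDisjointPaths x y k) :
    ¬ G.IsCutVertex v :=
  not_cut_vertex_general G k v hdeg hpaths
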